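/- arXiv:1008.5275 — 4 statements merged into one kernel-verified Lean document; each statement's English description precedes it below -/
import Mathlib

section
/- Let 𝒫 = (P_1, …, P_r) be an r-partition in ℝ^d. Then 0 ∈ aff(Φ(𝒫)) if and only if 𝒫 has an affine Tverberg point, i.e., ⋂_{i=1}^r aff(P_i) ≠ ∅. -/
open Finset

namespace BMZ

noncomputable section

/-- Points of `ℝ^d`. -/
abbrev Pt (d : ℕ) := EuclideanSpace ℝ (Fin d)

/-- The space `ℝ^N`, `N = (d+1)(r-1)`, with `r = s+2`, presented with double
indices `(k, l) ∈ [d+1] × [r-1]`. -/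
abbrev CSp (d s : ℕ) := EuclideanSpace ℝ (Fin (d + 1) × Fin (s + 1))

/-- `w` is the vertex set of a regular `(r-1)`-dimensional simplex centered at the
origin (here `r = s+2`): the vertices are affinely independent, pairwise
equidistant with a positive common distance, and their barycenter is the origin. -/
def IsRegularSimplex {s : ℕ} (w : Fin (s + 2) → EuclideanSpace ℝ (Fin (s + 1))) : Prop :=
  AffineIndependent ℝ w ∧
    (∃ e : ℝ, 0 < e ∧ ∀ i j, i ≠ j → dist (w i) (w j) = e) ∧
    ∑ i, w i = 0

/-- `x⁺ = (x, 1) ∈ ℝ^{d+1}`. -/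
def xplus {d : ℕ} (x : Pt d) : Fin (d + 1) → ℝ := Fin.snoc (x : Fin d → ℝ) 1

/-- The `i`-th clone `φ_i(x) := x⁺ ⊗ w_i ∈ ℝ^N`. -/
def clone {d s : ℕ} (w : Fin (s + 2) → EuclideanSpace ℝ (Fin (s + 1)))
    (x : Pt d) (i : Fin (s + 2)) : CSp d s :=
  WithLp.toLp 2 (fun kl : Fin (d + 1) × Fin (s + 1) => xplus x kl.1 * w i kl.2)

/-- The Sarkaria–Onn transform `Φ(𝒫)` of an `r`-partition `𝒫 = (P_1, …, P_r)`:
for every point `p ∈ P_i` we put the `i`-th clone of `p` into `Φ(𝒫)`. -/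
def Phi {d s : ℕ} (w : Fin (s + 2) → EuclideanSpace ℝ (Fin (s + 1)))
    (P : Fin (s + 2) → Finset (Pt d)) : Set (CSp d s) :=
  ⋃ i, (fun p => clone w p i) '' (P i : Set (Pt d))

/-- `N = (d+1)(r-1)`, the number of points of a BMZ-collection other than `z`. -/
abbrev NN (d s : ℕ) : ℕ := (d + 1) * (s + 1)

/-- Indices of the points `c_1, …, c_{N+1}` of a BMZ-collection (the last point
is `z`). A BMZ-collection is an injective map `c : Idx d s → Pt d`, with the color
classes `C_1, …, C_{d+2}` consisting of consecutive points as given by `colorOf`. -/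
abbrev Idx (d s : ℕ) := Fin (NN d s + 1)

/-- The color of the `i`-th point: each of the first `d+1` classes consists of
`r-1` consecutive points, and the last class is the singleton `{z}`. -/
def colorOf (d s : ℕ) (i : Idx d s) : Fin (d + 2) :=
  if h : (i : ℕ) < NN d s then
    Fin.castSucc ⟨(i : ℕ) / (s + 1),
      Nat.div_lt_of_lt_mul (by rw [Nat.mul_comm]; exact h)⟩
  else Fin.last (d + 1)

/-- Maximal rainbow `r`-partitions `ℛ = (R_1, …, R_r) ∈ 𝔅(𝒞)` (with `z ∈ R_r`) are
in bijective correspondence with tuples of permutations `π_k` of `[r]`, one for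
each of the first `d+1` colors: `π_k j` is the index of the class containing the
`j`-th point of `C_k` for `j ≤ r-1`, and `π_k r` is the index of the unique class
containing no point of `C_k`. -/
abbrev PartEnc (d s : ℕ) := Fin (d + 1) → Equiv.Perm (Fin (s + 2))

/-- The class of the `i`-th point in the partition encoded by `σ`; the point `z`
lies in the last class. -/
def classOf {d s : ℕ} (σ : PartEnc d s) (i : Idx d s) : Fin (s + 2) :=
  if h : (i : ℕ) < NN d s then
    σ ⟨(i : ℕ) / (s + 1), Nat.div_lt_of_lt_mul (by rw [Nat.mul_comm]; exact h)⟩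
      (Fin.castSucc ⟨(i : ℕ) % (s + 1), Nat.mod_lt _ (Nat.succ_pos s)⟩)
  else Fin.last (s + 1)

variable {d s : ℕ}

open Classical in
/-- The `k`-th color class of the configuration `c`, as a finite set of points. -/
def colorClass (c : Idx d s → Pt d) (k : Fin (d + 2)) : Finset (Pt d) :=
  (Finset.univ.filter fun i => colorOf d s i = k).image c

open Classical in
/-- The class `R_i` of the partition encoded by `σ`, as a finite set of points. -/
def classSet (c : Idx d s → Pt d) (σ : PartEnc d s) (i : Fin (s + 2)) : Finset (Pt d) :=
  (Finset.univ.filter fun j => classOf σ j = i).image c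

/-- `σ` encodes a Tverberg partition: the convex hulls of its classes have a
common point. -/
def IsTverberg (c : Idx d s → Pt d) (σ : PartEnc d s) : Prop :=
  (⋂ i, convexHull ℝ (classSet c σ i : Set (Pt d))).Nonempty

/-- The clones of all the points of the configuration, w.r.t. the partition `σ`. -/
def allClones (w : Fin (s + 2) → EuclideanSpace ℝ (Fin (s + 1)))
    (c : Idx d s → Pt d) (σ : PartEnc d s) : Idx d s → CSp d s :=
  fun i => clone w (c i) (classOf σ i)

/-- The vertices of `F_ℛ = conv Φ(ℛ - z)`, ordered by the numbering of the points. -/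
def rows (w : Fin (s + 2) → EuclideanSpace ℝ (Fin (s + 1)))
    (c : Idx d s → Pt d) (σ : PartEnc d s) : Fin (NN d s) → CSp d s :=
  fun i => allClones w c σ i.castSucc

/-- `Φ(ℛ - a)`: the clones of all points except `a`. -/
def PhiMinus (w : Fin (s + 2) → EuclideanSpace ℝ (Fin (s + 1)))
    (c : Idx d s → Pt d) (σ : PartEnc d s) (a : Idx d s) : Set (CSp d s) :=
  allClones w c σ '' {i | i ≠ a}

/-- The simplex `F_ℛ = conv Φ(ℛ - z)`. -/
def Fface (w : Fin (s + 2) → EuclideanSpace ℝ (Fin (s + 1)))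
    (c : Idx d s → Pt d) (σ : PartEnc d s) : Set (CSp d s) :=
  convexHull ℝ (Set.range (rows w c σ))

/-- `𝒞` is in sufficiently general position: each `Φ(ℛ - z)` is affinely
independent, and `0 ∉ aff Φ(ℛ - a)` for all `ℛ ∈ 𝔅(𝒞)` and `a ∈ C`. -/
def SuffGenPos (w : Fin (s + 2) → EuclideanSpace ℝ (Fin (s + 1)))
    (c : Idx d s → Pt d) : Prop :=
  (∀ σ : PartEnc d s, AffineIndependent ℝ (rows w c σ)) ∧
  (∀ (σ : PartEnc d s) (a : Idx d s), (0 : CSp d s) ∉ affineSpan ℝ (PhiMinus w c σ a))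

/-- A ridge `conv Φ(ℛ - z - a)`, `a ∈ C \ {z}`. -/
def ridge (w : Fin (s + 2) → EuclideanSpace ℝ (Fin (s + 1)))
    (c : Idx d s → Pt d) (σ : PartEnc d s) (a : Fin (NN d s)) : Set (CSp d s) :=
  convexHull ℝ (rows w c σ '' {i | i ≠ a})

/-- `𝒞` is in almost general position: all ridges avoid the origin. -/
def AlmostGenPos (w : Fin (s + 2) → EuclideanSpace ℝ (Fin (s + 1)))
    (c : Idx d s → Pt d) : Prop :=
  ∀ (σ : PartEnc d s) (a : Fin (NN d s)), (0 : CSp d s) ∉ ridge w c σ a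

/-- The ray emanating from `0` in the direction `u`. -/
def raySet (u : CSp d s) : Set (CSp d s) := {x | ∃ t : ℝ, 0 ≤ t ∧ x = t • u}

/-- A ray emanating from `0` is generic for `𝒞` if it intersects no ridge. -/
def GenericRay (w : Fin (s + 2) → EuclideanSpace ℝ (Fin (s + 1)))
    (c : Idx d s → Pt d) (u : CSp d s) : Prop :=
  ∀ (σ : PartEnc d s) (a : Fin (NN d s)), ∀ x ∈ raySet u, x ∉ ridge w c σ a

/-- The combinatorial sign `csgn(ℛ) = ∏_k sgn(π_k)`. -/
def csgn (σ : PartEnc d s) : ℤ := ∏ k, (Equiv.Perm.sign (σ k) : ℤ)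

/-- The sign of a real number, as an integer. -/
def sgnR (x : ℝ) : ℤ := if 0 < x then 1 else if x < 0 then -1 else 0

/-- The geometric sign `gsgn(ℛ)`: the sign of the determinant of the `N × N`
matrix whose rows are the vertices of `F_ℛ`, ordered by the numbering of the
points of `C`. -/
def gsgn (w : Fin (s + 2) → EuclideanSpace ℝ (Fin (s + 1)))
    (c : Idx d s → Pt d) (σ : PartEnc d s) : ℤ :=
  sgnR (Matrix.det (Matrix.of fun i j : Fin (NN d s) =>
    rows w c σ i (finProdFinEquiv.symm j)))

/-- The sign `sgn(ℛ) = gsgn(ℛ) ⬝ csgn(ℛ)`. -/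
def psgn (w : Fin (s + 2) → EuclideanSpace ℝ (Fin (s + 1)))
    (c : Idx d s → Pt d) (σ : PartEnc d s) : ℤ :=
  gsgn w c σ * csgn σ

/-- `z* = φ_r(z)`. -/
def zstar (w : Fin (s + 2) → EuclideanSpace ℝ (Fin (s + 1)))
    (c : Idx d s → Pt d) : CSp d s :=
  clone w (c (Fin.last (NN d s))) (Fin.last (s + 1))

open Classical in
/-- The degree of `𝒞` measured along the ray from `0` in direction `u`:
`deg_ψ(𝒞) = Σ_{ℛ ∈ 𝔅(𝒞), ψ ∩ F_ℛ ≠ ∅} sgn(ℛ)`. -/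
def degRay (w : Fin (s + 2) → EuclideanSpace ℝ (Fin (s + 1)))
    (c : Idx d s → Pt d) (u : CSp d s) : ℤ :=
  ∑ σ : PartEnc d s, if (raySet u ∩ Fface w c σ).Nonempty then psgn w c σ else 0

/-- The degree `deg(𝒞)`, measured along the ray `ρ` emanating from `0` in the
direction `-z*`. -/
def degC (w : Fin (s + 2) → EuclideanSpace ℝ (Fin (s + 1)))
    (c : Idx d s → Pt d) : ℤ :=
  degRay w c (-(zstar w c))

end

end BMZ

/-!
A point of `aff Φ(𝒫)` is `∑ᵢ ∑_{p ∈ Pᵢ} λᵢₚ (p⁺ ⊗ wᵢ) = ∑ᵢ Vᵢ ⊗ wᵢ` with `Vᵢ = ∑_{p ∈ Pᵢ} λᵢₚ p⁺`.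
The only linear relations among the `wᵢ` are the multiples of `∑ᵢ wᵢ = 0`, so this combination
vanishes iff all `Vᵢ` are equal. The last coordinate of `Vᵢ` is the total weight on `Pᵢ`; hence
equal `Vᵢ` with total weight `1` are `q⁺ / r` for a point `q` that is an affine combination of
every `Pᵢ`; conversely, writing such a `q` as `∑_{p ∈ Pᵢ} aᵢₚ p` for each `i`, the weights
`λᵢₚ = aᵢₚ / r` put `0` into `aff Φ(𝒫)`.
-/

section AffineSpan

variable {k V ι : Type*} [Ring k] [Nontrivial k] [AddCommGroup V] [Module k V]

theorem mem_affineSpan_image_finset_iff {s : Finset ι} {v : ι → V} {x : V} :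
    x ∈ affineSpan k (v '' s) ↔ ∃ a : ι → k, ∑ i ∈ s, a i = 1 ∧ ∑ i ∈ s, a i • v i = x := by
  classical
  constructor
  · intro hx
    obtain ⟨t, a, hts, ha, rfl⟩ := eq_affineCombination_of_mem_affineSpan_image hx
    have hst : s ∩ t = t := Finset.inter_eq_right.2 (by exact_mod_cast hts)
    refine ⟨fun i => if i ∈ t then a i else 0, by rwa [Finset.sum_ite_mem, hst], ?_⟩
    simp only [ite_smul, zero_smul]
    rw [Finset.sum_ite_mem, hst, t.affineCombination_eq_linear_combination v a ha]
  · rintro ⟨a, ha, rfl⟩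
    rw [← s.affineCombination_eq_linear_combination v a ha]
    exact affineCombination_mem_affineSpan_image ha (fun i hi his => absurd hi his) v

end AffineSpan

theorem AffineIndependent.sum_smul_eq_zero_iff {k V ι : Type*} [Field k] [CharZero k]
    [AddCommGroup V] [Module k V] [Fintype ι] {w : ι → V} (hw : AffineIndependent k w)
    (hw0 : ∑ i, w i = 0) {c : ι → k} : ∑ i, c i • w i = 0 ↔ ∀ i j, c i = c j := by
  constructor
  · intro hc i j
    -- the weights `|ι| c - ∑ c` sum to zero, so affine independence kills them
    have hzero := affineIndependent_iff.1 hw Finset.univ (fun i => Fintype.card ι * c i - ∑ j, c j)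
      (by simp [Finset.sum_sub_distrib, Finset.mul_sum])
      (by simp only [sub_smul, Finset.sum_sub_distrib, mul_smul, ← Finset.smul_sum, hc, hw0,
        smul_zero, sub_self])
    have hcard : (Fintype.card ι : k) ≠ 0 := Nat.cast_ne_zero.2 (Fintype.card_pos_iff.2 ⟨i⟩).ne'
    have hi := sub_eq_zero.1 (hzero i (Finset.mem_univ i))
    have hj := sub_eq_zero.1 (hzero j (Finset.mem_univ j))
    exact mul_left_cancel₀ hcard (hi.trans hj.symm)
  · intro hc
    rcases isEmpty_or_nonempty ι with _ | ⟨⟨i₀⟩⟩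
    · simp
    · simp only [hc _ i₀, ← Finset.smul_sum, hw0, smul_zero]

namespace BMZ

variable {d s : ℕ}

theorem sum_smul_xplus (F : Finset (Pt d)) (a : Pt d → ℝ) :
    ∑ p ∈ F, a p • xplus p = Fin.snoc (⇑(∑ p ∈ F, a p • p)) (∑ p ∈ F, a p) := by
  ext k
  induction k using Fin.lastCases <;> simp [xplus, Finset.sum_apply]

theorem sum_smul_xplus_last (F : Finset (Pt d)) (a : Pt d → ℝ) :
    (∑ p ∈ F, a p • xplus p) (Fin.last d) = ∑ p ∈ F, a p := by
  rw [sum_smul_xplus, Fin.snoc_last]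

theorem xplus_toLp_init {u : Fin (d + 1) → ℝ} (hu : u (Fin.last d) = 1) :
    xplus (WithLp.toLp 2 (Fin.init u)) = u := by
  rw [xplus, ← hu]
  exact Fin.snoc_init_self u

theorem mem_affineSpan_iff_exists_sum_smul_xplus {F : Finset (Pt d)} {q : Pt d} :
    q ∈ affineSpan ℝ (F : Set (Pt d)) ↔ ∃ a : Pt d → ℝ, ∑ p ∈ F, a p • xplus p = xplus q := by
  rw [← Set.image_id (F : Set (Pt d)), mem_affineSpan_image_finset_iff]
  simp only [id, sum_smul_xplus]
  simp only [xplus, Fin.snoc_inj, ← WithLp.ext_iff, and_comm]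

theorem Phi_eq_image_sigma (w : Fin (s + 2) → EuclideanSpace ℝ (Fin (s + 1)))
    (P : Fin (s + 2) → Finset (Pt d)) :
    Phi w P = (fun x : (_ : Fin (s + 2)) × Pt d => clone w x.2 x.1) '' (Finset.univ.sigma P) := by
  ext y
  simp [Phi]

theorem mem_affineSpan_Phi_iff (w : Fin (s + 2) → EuclideanSpace ℝ (Fin (s + 1)))
    (P : Fin (s + 2) → Finset (Pt d)) {y : CSp d s} :
    y ∈ affineSpan ℝ (Phi w P) ↔ ∃ a : Fin (s + 2) → Pt d → ℝ,
      ∑ i, ∑ p ∈ P i, a i p = 1 ∧ ∑ i, ∑ p ∈ P i, a i p • clone w p i = y := by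
  rw [Phi_eq_image_sigma, mem_affineSpan_image_finset_iff]
  constructor
  · rintro ⟨a, ha, hy⟩
    exact ⟨fun i p => a ⟨i, p⟩, by rwa [Finset.sum_sigma] at ha, by rwa [Finset.sum_sigma] at hy⟩
  · rintro ⟨a, ha, hy⟩
    exact ⟨fun x => a x.1 x.2, by rwa [Finset.sum_sigma], by rwa [Finset.sum_sigma]⟩

theorem sum_smul_clone_apply (w : Fin (s + 2) → EuclideanSpace ℝ (Fin (s + 1)))
    (P : Fin (s + 2) → Finset (Pt d)) (a : Fin (s + 2) → Pt d → ℝ) (k : Fin (d + 1))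
    (l : Fin (s + 1)) :
    (∑ i, ∑ p ∈ P i, a i p • clone w p i) (k, l) =
      ∑ i, (∑ p ∈ P i, a i p • xplus p) k * w i l := by
  simp [clone, Finset.sum_apply, Finset.sum_mul, mul_assoc]

theorem sum_smul_clone_eq_zero_iff {w : Fin (s + 2) → EuclideanSpace ℝ (Fin (s + 1))}
    (hw : IsRegularSimplex w) (P : Fin (s + 2) → Finset (Pt d)) (a : Fin (s + 2) → Pt d → ℝ) :
    ∑ i, ∑ p ∈ P i, a i p • clone w p i = 0 ↔
      ∀ i j, ∑ p ∈ P i, a i p • xplus p = ∑ p ∈ P j, a j p • xplus p := by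
  have hcoord : ∀ k, (∀ l, (∑ i, ∑ p ∈ P i, a i p • clone w p i) (k, l) = 0) ↔
      ∀ i j, (∑ p ∈ P i, a i p • xplus p) k = (∑ p ∈ P j, a j p • xplus p) k := by
    intro k
    rw [← hw.1.sum_smul_eq_zero_iff hw.2.2, WithLp.ext_iff, funext_iff]
    simp [sum_smul_clone_apply, Finset.sum_apply]
  rw [WithLp.ext_iff, funext_iff, Prod.forall]
  simp only [WithLp.ofLp_zero, Pi.zero_apply, hcoord, funext_iff]
  exact ⟨fun h i j k => h k i j, fun h k i j => h i j k⟩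

end BMZ

open BMZ in
theorem zero_mem_affineSpan_iff_general (d s : ℕ)
    (w : Fin (s + 2) → EuclideanSpace ℝ (Fin (s + 1))) (hw : IsRegularSimplex w)
    (P : Fin (s + 2) → Finset (Pt d)) :
    (0 : CSp d s) ∈ affineSpan ℝ (Phi w P) ↔
      (⋂ i, (affineSpan ℝ (P i : Set (Pt d)) : Set (Pt d))).Nonempty := by
  have hr : ((s : ℝ) + 2) ≠ 0 := by positivity
  simp only [mem_affineSpan_Phi_iff, sum_smul_clone_eq_zero_iff hw, Set.Nonempty, Set.mem_iInter,
    SetLike.mem_coe, mem_affineSpan_iff_exists_sum_smul_xplus]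
  constructor
  · rintro ⟨a, ha, hV⟩
    set U := ((s : ℝ) + 2) • ∑ p ∈ P 0, a 0 p • xplus p
    have hU : U (Fin.last d) = 1 := by
      simp only [U, Pi.smul_apply, smul_eq_mul, ← ha, ← sum_smul_xplus_last, hV _ 0]
      simp
    refine ⟨WithLp.toLp 2 (Fin.init U), fun i => ⟨fun p => ((s : ℝ) + 2) * a i p, ?_⟩⟩
    simp_rw [xplus_toLp_init hU, U, mul_smul, ← Finset.smul_sum, hV i 0]
  · rintro ⟨q, hq⟩
    choose b hb using hq
    have hb1 : ∀ i, ∑ p ∈ P i, b i p = 1 := fun i => by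
      rw [← sum_smul_xplus_last, hb i]
      simp [xplus]
    refine ⟨fun i p => ((s : ℝ) + 2)⁻¹ * b i p, ?_, fun i j => ?_⟩
    · simp [← Finset.mul_sum, hb1, hr]
    · simp only [mul_smul, ← Finset.smul_sum, hb]

open BMZ in
/-- Let `𝒫 = (P_1, …, P_r)` be an `r`-partition in `ℝ^d` (here `r = s+2 ≥ 2`).
Then `0 ∈ aff(Φ(𝒫))` iff `𝒫` has an affine Tverberg point,
i.e. `⋂_i aff(P_i) ≠ ∅`. -/
theorem zero_mem_affineSpan_iff (d s : ℕ) (hd : 1 ≤ d)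
    (w : Fin (s + 2) → EuclideanSpace ℝ (Fin (s + 1))) (hw : IsRegularSimplex w)
    (P : Fin (s + 2) → Finset (Pt d))
    (hP : Pairwise fun i i' => Disjoint (P i) (P i')) :
    (0 : CSp d s) ∈ affineSpan ℝ (Phi w P) ↔
      (⋂ i, (affineSpan ℝ (P i : Set (Pt d)) : Set (Pt d))).Nonempty :=
  zero_mem_affineSpan_iff_general d s w hw P
end

section
/- (Orientable pseudomanifold property) Let 𝒞 be a BMZ-collection, let ℛ ∈ 𝔅(𝒞) and let a ∈ C \ {z}. Then there is exactly one ℛ′ ∈ 𝔅(𝒞) distinct from ℛ such that every point of C \ {z, a} lies in the same class in ℛ′ as in ℛ (so that the simplices F_ℛ and F_{ℛ′} share the ridge conv(Φ(ℛ−z−a))), and moreover csgn(ℛ′) = −csgn(ℛ). -/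
open Finset

/-!
A partition `ℛ ∈ 𝔅(𝒞)` is the same thing as a tuple of permutations `π_k` of `[r]`. If `a` is the
`m`-th point of `C_k`, then keeping every point other than `a` in its class fixes all `π_l` with
`l ≠ k` (a permutation is determined by all but one of its values) and fixes `π_k` away from the
two positions `m` and `r`. A permutation is determined off two positions up to composing with
their transposition, so the only `ℛ' ≠ ℛ` is `π_k ↦ π_k ∘ (m r)`, which flips the sign of `π_k`.
-/

open Equiv Function

namespace BMZ

section Permutations

variable {β : Type*} [DecidableEq β]

theorem Perm.eq_or_eq_mul_swap_of_apply_eq {f g : Perm β} {x y : β}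
    (h : ∀ z, z ≠ x → z ≠ y → g z = f z) : g = f ∨ g = f * swap x y := by
  set p := f⁻¹ * g with hp
  have hg : g = f * p := by rw [hp, mul_inv_cancel_left]
  have hfix : ∀ z, z ≠ x → z ≠ y → p z = z := fun z hzx hzy => by
    simp [hp, Perm.mul_apply, h z hzx hzy]
  -- `p` fixes the complement of `{x, y}` pointwise, hence maps `{x, y}` into itself
  have hmaps : ∀ w, p w = w ∨ p w = x ∨ p w = y := fun w => by
    by_contra! hw
    exact hw.1 (p.injective (hfix _ hw.2.1 hw.2.2))
  rw [hg]
  by_cases hx : p x = x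
  · left
    suffices p = 1 by rw [this, mul_one]
    ext z
    grind [Perm.one_apply, hmaps y, hfix z, p.injective.eq_iff (a := x) (b := y)]
  · right
    congr 1
    ext z
    grind [hmaps x, hmaps y, hfix z, p.injective.eq_iff (a := x) (b := y)]

theorem Perm.eq_of_apply_eq {f g : Perm β} {x : β} (h : ∀ z, z ≠ x → g z = f z) :
    g = f := by
  simpa only [swap_self, ← Perm.one_def, mul_one, or_self] using
    Perm.eq_or_eq_mul_swap_of_apply_eq (x := x) (y := x) fun z hz _ => h z hz

variable {ι : Type*} [DecidableEq ι]

theorem ne_and_apply_eq_iff_eq_update_mul_swap {σ σ' : ι → Perm β} {k₀ : ι} {x ℓ : β}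
    (hx : x ≠ ℓ) :
    (σ' ≠ σ ∧ ∀ k z, z ≠ ℓ → (k, z) ≠ (k₀, x) → σ' k z = σ k z) ↔
      σ' = update σ k₀ (σ k₀ * swap x ℓ) := by
  constructor
  · rintro ⟨hne, h⟩
    have hk₀ : σ' k₀ = σ k₀ * swap x ℓ := by
      refine (Perm.eq_or_eq_mul_swap_of_apply_eq fun z hzx hzℓ =>
        h k₀ z hzℓ (by simp [hzx])).resolve_left fun heq => hne ?_
      funext k
      rcases eq_or_ne k k₀ with rfl | hk
      · exact heq
      · exact Perm.eq_of_apply_eq fun z hz => h k z hz (by simp [hk])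
    funext k
    rcases eq_or_ne k k₀ with rfl | hk
    · rw [update_self, hk₀]
    · rw [update_of_ne hk]
      exact Perm.eq_of_apply_eq fun z hz => h k z hz (by simp [hk])
  · rintro rfl
    refine ⟨fun h => hx ((σ k₀).injective ?_).symm, fun k z hz hkz => ?_⟩
    · simpa using congr($h k₀ x)
    · rcases eq_or_ne k k₀ with rfl | hk
      · have hzx : z ≠ x := fun h => hkz (by rw [h])
        simp [swap_apply_of_ne_of_ne hzx hz]
      · rw [update_of_ne hk]

end Permutations

variable {d s : ℕ}

theorem csgn_update_mul_swap (σ : PartEnc d s) (k₀ : Fin (d + 1)) {x y : Fin (s + 2)}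
    (hxy : x ≠ y) : csgn (update σ k₀ (σ k₀ * swap x y)) = -csgn σ := by
  rw [csgn, csgn, ← Finset.mul_prod_erase _ _ (Finset.mem_univ k₀),
    ← Finset.mul_prod_erase _ _ (Finset.mem_univ k₀), update_self,
    Finset.prod_congr rfl fun k hk => by rw [update_of_ne (Finset.ne_of_mem_erase hk)],
    Perm.sign_mul, Perm.sign_swap hxy]
  push_cast
  ring

theorem classOf_castSucc (σ : PartEnc d s) (j : Fin (NN d s)) :
    classOf σ j.castSucc = σ j.divNat j.modNat.castSucc :=
  dif_pos j.isLt

theorem forall_classOf_castSucc_eq_iff {σ σ' : PartEnc d s} {a : Fin (NN d s)} :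
    (∀ j : Fin (NN d s), j ≠ a → classOf σ' j.castSucc = classOf σ j.castSucc) ↔
      ∀ k z, z ≠ Fin.last (s + 1) → (k, z) ≠ (a.divNat, a.modNat.castSucc) → σ' k z = σ k z := by
  simp only [classOf_castSucc]
  constructor
  · intro h k z hz hkz
    obtain ⟨m, rfl⟩ := Fin.exists_castSucc_eq.mpr hz
    obtain ⟨hk, hm⟩ :
        (finProdFinEquiv (k, m)).divNat = k ∧ (finProdFinEquiv (k, m)).modNat = m :=
      Prod.ext_iff.mp (finProdFinEquiv.symm_apply_apply (k, m))
    have := h (finProdFinEquiv (k, m)) fun hj => hkz (by subst hj; rw [hk, hm])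
    rwa [hk, hm] at this
  · intro h j hj
    refine h _ _ (Fin.castSucc_ne_last _) fun hja => hj (finProdFinEquiv.symm.injective ?_)
    simp only [Prod.ext_iff, Fin.castSucc_inj] at hja
    exact Prod.ext hja.1 hja.2

end BMZ

open BMZ in
theorem pseudomanifold_property_general (d s : ℕ)
    (σ : PartEnc d s) (a : Fin (NN d s)) :
    (∃! σ' : PartEnc d s, σ' ≠ σ ∧
        ∀ j : Fin (NN d s), j ≠ a →
          classOf σ' j.castSucc = classOf σ j.castSucc) ∧
    (∀ σ' : PartEnc d s, σ' ≠ σ →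
        (∀ j : Fin (NN d s), j ≠ a →
          classOf σ' j.castSucc = classOf σ j.castSucc) →
        csgn σ' = -csgn σ) := by
  have hflip : ∀ σ' : PartEnc d s, (σ' ≠ σ ∧ ∀ j : Fin (NN d s), j ≠ a →
      classOf σ' j.castSucc = classOf σ j.castSucc) ↔
        σ' = update σ a.divNat (σ a.divNat * swap a.modNat.castSucc (Fin.last (s + 1))) :=
    fun σ' => by
      rw [forall_classOf_castSucc_eq_iff]
      exact ne_and_apply_eq_iff_eq_update_mul_swap (Fin.castSucc_ne_last _)
  refine ⟨(existsUnique_congr hflip).2 existsUnique_eq, fun σ' hne h => ?_⟩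
  rw [(hflip σ').1 ⟨hne, h⟩]
  exact csgn_update_mul_swap σ _ (Fin.castSucc_ne_last _)

open BMZ in
/-- **orientable pseudomanifold property.**
Let `𝒞` be a BMZ-collection, let `ℛ ∈ 𝔅(𝒞)` (encoded by `σ`) and let
`a ∈ C \\ {z}`. Then there is exactly one `ℛ' ∈ 𝔅(𝒞)` distinct from `ℛ` in
which every point of `C \\ {z, a}` lies in the same class as in `ℛ`, and
moreover `csgn(ℛ') = -csgn(ℛ)`. -/
theorem pseudomanifold_property (d s : ℕ) (hd : 1 ≤ d)
    (σ : PartEnc d s) (a : Fin (NN d s)) :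
    (∃! σ' : PartEnc d s, σ' ≠ σ ∧
        ∀ j : Fin (NN d s), j ≠ a →
          classOf σ' j.castSucc = classOf σ j.castSucc) ∧
    (∀ σ' : PartEnc d s, σ' ≠ σ →
        (∀ j : Fin (NN d s), j ≠ a →
          classOf σ' j.castSucc = classOf σ j.castSucc) →
        csgn σ' = -csgn σ) :=
  pseudomanifold_property_general d s σ a
end

section
/- Let 𝒞 be a BMZ-collection in sufficiently general position. If ψ and ν are generic rays for 𝒞, then deg_ψ(𝒞) = deg_ν(𝒞). -/
open Finset

/-!
For each maximal rainbow partition `σ` the vertices of `F_σ` form a basis of `ℝ^N` (general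
position), and a generic ray meets `F_σ` iff its direction has positive coordinates in that basis.
So `deg` counts, with signs, the simplicial cones over the facets `F_σ` that contain the direction.
Moving a single point of `σ` to the class missing its color (`flipAt`) gives the unique other cone
sharing the facet of `σ` opposite that point, and changes `csgn`. By Cramer's rule the
coordinates of any point along the two opposite vertices differ by the factor `det σ / det σ'`, so
the two signs `sgn` agree exactly when the cones lie on opposite sides of the facet. Hence, if a
point on a facet is counted with weight `1/2`, crossing a facet never changes the signed count:
it is locally constant away from the codimension-two faces, and any two generic directions can be
joined, after a small perturbation, by a segment that avoids those faces.
-/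

open Filter Topology Module

theorem Module.Basis.det_update_eq_repr_mul {ι R M : Type*} [Fintype ι] [DecidableEq ι]
    [CommRing R] [AddCommGroup M] [Module R M] (e b : Basis ι R M) (a : ι) (x : M) :
    e.det (Function.update b a x) = b.repr x a * e.det b := by
  have hmk : Basis.mk b.linearIndependent b.span_eq.ge = b :=
    Basis.eq_of_apply_eq fun i => Basis.mk_apply _ _ i
  have h := LinearMap.congr_fun
    (e.det_smul_mk_coord_eq_det_update b.linearIndependent b.span_eq.ge a) x
  rw [hmk] at h
  simpa [mul_comm] using h.symm

theorem dense_setOf_ne_zero {E : Type*} [NormedAddCommGroup E] [NormedSpace ℝ E]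
    {f : E →ₗ[ℝ] ℝ} (hf : f ≠ 0) : Dense {x | f x ≠ 0} := by
  have : interior (LinearMap.ker f : Set E) = ∅ := by
    by_contra h
    exact hf (LinearMap.ker_eq_top.1
      ((LinearMap.ker f).eq_top_of_nonempty_interior' (Set.nonempty_iff_ne_empty.2 h)))
  exact interior_eq_empty_iff_dense_compl.1 this

theorem exists_mem_nhds_forall_ne_zero {E J : Type*} [NormedAddCommGroup E] [NormedSpace ℝ E]
    [FiniteDimensional ℝ E] [Finite J] {g : J → E →ₗ[ℝ] ℝ} (hg : ∀ j, g j ≠ 0)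
    {x : E} {U : Set E} (hU : U ∈ 𝓝 x) : ∃ y ∈ U, ∀ j, g j y ≠ 0 := by
  have := FiniteDimensional.complete ℝ E
  have hdense : Dense (⋂ j, {y | g j y ≠ 0}) :=
    dense_iInter_of_isOpen (fun j => isOpen_ne_fun (g j).continuous_of_finiteDimensional
      continuous_const) fun j => dense_setOf_ne_zero (hg j)
  obtain ⟨y, hy, hyU⟩ := hdense.inter_nhds_nonempty hU
  exact ⟨y, hyU, Set.mem_iInter.1 hy⟩

section RealBasis

variable {V κ : Type*} [AddCommGroup V] [Module ℝ V] [Fintype κ]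

theorem AffineIndependent.linearIndependent_of_zero_notMem_affineSpan {v : κ → V}
    (ha : AffineIndependent ℝ v) (h0 : (0 : V) ∉ affineSpan ℝ (Set.range v)) :
    LinearIndependent ℝ v := by
  refine Fintype.linearIndependent_iff.2 fun g hg => ?_
  by_cases hS : ∑ i, g i = 0
  · exact fun i => affineIndependent_iff.1 ha Finset.univ g hS hg i (Finset.mem_univ i)
  refine absurd ?_ h0
  have hw : ∑ i, g i / ∑ j, g j = 1 := by rw [← Finset.sum_div, div_self hS]
  have hzero : ∑ i, (g i / ∑ j, g j) • v i = 0 := by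
    simp_rw [div_eq_inv_mul, ← smul_smul, ← Finset.smul_sum, hg, smul_zero]
  have hmem := affineCombination_mem_affineSpan (k := ℝ) hw v
  rwa [Finset.affineCombination_eq_linear_combination _ _ _ hw, hzero] at hmem

theorem Module.Basis.sum_repr_pos (b : Basis κ ℝ V) {y : V} (hy : y ≠ 0)
    (hnn : ∀ i, 0 ≤ b.repr y i) : 0 < ∑ i, b.repr y i := by
  refine (Finset.sum_nonneg fun i _ => hnn i).lt_of_ne' fun hS => hy ?_
  have hzero := (Finset.sum_eq_zero_iff_of_nonneg fun i _ => hnn i).1 hS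
  rw [← b.sum_repr y]
  exact Finset.sum_eq_zero fun i hi => by rw [hzero i hi, zero_smul]

theorem Module.Basis.mem_convexHull_range_iff (b : Basis κ ℝ V) {x : V} :
    x ∈ convexHull ℝ (Set.range b) ↔ (∀ i, 0 ≤ b.repr x i) ∧ ∑ i, b.repr x i = 1 := by
  classical
  have hrange : Set.range b =
      (b.equivFun.symm : (κ → ℝ) →ₗ[ℝ] V) '' Set.range fun i => Pi.single i 1 := by
    rw [← Set.range_comp]
    congr 1
    ext1 i
    simp
  rw [hrange, ← LinearMap.image_convexHull, convexHull_rangle_single_eq_stdSimplex,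
    LinearEquiv.coe_coe, LinearEquiv.image_symm_eq_preimage]
  rfl

theorem Module.Basis.mem_convexHull_image_ne (b : Basis κ ℝ V) {x : V} {a : κ}
    (hnn : ∀ i, 0 ≤ b.repr x i) (hsum : ∑ i, b.repr x i = 1) (ha : b.repr x a = 0) :
    x ∈ convexHull ℝ (b '' {i | i ≠ a}) := by
  classical
  have hx : ∑ i ∈ Finset.univ.erase a, b.repr x i • b i = x := by
    rw [Finset.sum_erase _ (by rw [ha, zero_smul]), b.sum_repr]
  rw [← hx]
  refine (convex_convexHull ℝ _).sum_mem (fun i _ => hnn i) ?_ fun i hi => ?_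
  · rwa [Finset.sum_erase _ ha]
  · exact subset_convexHull ℝ _ ⟨i, Finset.ne_of_mem_erase hi, rfl⟩

theorem Module.Basis.exists_smul_mem_convexHull_range_iff (b : Basis κ ℝ V) {y : V} :
    (∃ t : ℝ, 0 ≤ t ∧ t • y ∈ convexHull ℝ (Set.range b)) ↔ y ≠ 0 ∧ ∀ i, 0 ≤ b.repr y i := by
  simp only [b.mem_convexHull_range_iff, map_smul, Finsupp.smul_apply, smul_eq_mul]
  constructor
  · rintro ⟨t, ht, hnn, hsum⟩
    rw [← Finset.mul_sum] at hsum
    refine ⟨fun hy => by simp [hy] at hsum, fun i => ?_⟩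
    have ht' : 0 < t := ht.lt_of_ne' fun h => by simp [h] at hsum
    exact nonneg_of_mul_nonneg_right (by linarith [hnn i]) ht'
  · rintro ⟨hy, hnn⟩
    have hS := b.sum_repr_pos hy hnn
    refine ⟨(∑ i, b.repr y i)⁻¹, inv_nonneg.2 hS.le, fun i => ?_, ?_⟩
    · exact mul_nonneg (inv_nonneg.2 hS.le) (hnn i)
    · rw [← Finset.mul_sum, inv_mul_cancel₀ hS.ne']

end RealBasis

namespace BMZ

noncomputable section

def heaviside (y : ℝ) : ℚ := (1 + (SignType.sign y : ℚ)) / 2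

theorem heaviside_of_pos {y : ℝ} (hy : 0 < y) : heaviside y = 1 := by
  norm_num [heaviside, sign_pos hy]

theorem heaviside_of_neg {y : ℝ} (hy : y < 0) : heaviside y = 0 := by
  norm_num [heaviside, sign_neg hy]

theorem eventually_heaviside_eq {X : Type*} [TopologicalSpace X] {f : X → ℝ} {x₀ : X}
    (hf : ContinuousAt f x₀) (h₀ : f x₀ ≠ 0) :
    ∀ᶠ x in 𝓝 x₀, heaviside (f x) = heaviside (f x₀) := by
  rcases h₀.lt_or_gt with hneg | hpos
  · filter_upwards [hf.eventually (gt_mem_nhds hneg)] with x hx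
    rw [heaviside_of_neg hx, heaviside_of_neg hneg]
  · filter_upwards [hf.eventually (lt_mem_nhds hpos)] with x hx
    rw [heaviside_of_pos hx, heaviside_of_pos hpos]

section Fan

variable {E : Type*} [NormedAddCommGroup E] [NormedSpace ℝ E] {ι κ : Type*}
  {e : Basis κ ℝ E} {b : ι → Basis κ ℝ E} {χ : ι → ℤ} {nbr : ι → κ → ι}

variable (b χ nbr) in
structure IsOrientedPseudomanifold : Prop where
  nbr_apply_of_ne : ∀ σ a i, i ≠ a → b (nbr σ a) i = b σ i
  nbr_nbr : ∀ σ a, nbr (nbr σ a) a = σ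
  χ_nbr : ∀ σ a, χ (nbr σ a) = -χ σ

variable (b) in
def IsRegularPoint (x : E) : Prop :=
  ∀ σ, (∃ i, (b σ).repr x i < 0) ∨ ∀ i j, (b σ).repr x i = 0 → (b σ).repr x j = 0 → i = j

variable (b) in
def InFacetInterior (σ : ι) (a : κ) (x : E) : Prop :=
  (b σ).repr x a = 0 ∧ ∀ i ≠ a, 0 < (b σ).repr x i

theorem InFacetInterior.unique {σ : ι} {a a' : κ} {x : E} (h : InFacetInterior b σ a x)
    (h' : InFacetInterior b σ a' x) : a = a' := by
  by_contra hne
  exact (h.2 a' (Ne.symm hne)).ne' h'.1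

theorem isRegularPoint_of_forall_pos_or_exists_neg {x : E}
    (h : ∀ σ, (∀ i, 0 < (b σ).repr x i) ∨ ∃ i, (b σ).repr x i < 0) : IsRegularPoint b x :=
  fun σ => (h σ).symm.imp_right fun hpos i _ hi _ => absurd hi (hpos i).ne'

theorem IsRegularPoint.exists_neg_or_forall_ne_zero {x : E} (hx : IsRegularPoint b x) (σ : ι)
    (hσ : ∀ a, ¬ InFacetInterior b σ a x) :
    (∃ i, (b σ).repr x i < 0) ∨ ∀ i, (b σ).repr x i ≠ 0 := by
  rcases hx σ with hneg | huniq
  · exact Or.inl hneg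
  by_contra! hcon
  obtain ⟨hnn, a, ha⟩ := hcon
  exact hσ a ⟨ha, fun i hi => (hnn i).lt_of_ne' fun h0 => hi (huniq i a h0 ha)⟩

theorem isRegularPoint_lineMap {x y : E}
    (h : ∀ σ i j, i ≠ j → (b σ).repr x i * (b σ).repr y j - (b σ).repr x j * (b σ).repr y i ≠ 0)
    (t : ℝ) : IsRegularPoint b (AffineMap.lineMap x y t) := by
  refine fun σ => Or.inr fun i j hi hj => ?_
  by_contra hij
  apply h σ i j hij
  simp only [AffineMap.lineMap_apply_module, map_add, map_smul, Finsupp.add_apply,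
    Finsupp.smul_apply, smul_eq_mul] at hi hj
  linear_combination ((b σ).repr x i - (b σ).repr y i) * hj
    - ((b σ).repr x j - (b σ).repr y j) * hi

variable [Fintype κ]

theorem InFacetInterior.eventually_pos [FiniteDimensional ℝ E] {σ : ι} {a : κ} {x₀ : E}
    (h : InFacetInterior b σ a x₀) : ∀ᶠ x in 𝓝 x₀, ∀ i ≠ a, 0 < (b σ).repr x i := by
  refine eventually_all.2 fun i => ?_
  rcases eq_or_ne i a with rfl | hi
  · exact Eventually.of_forall fun _ hi => absurd rfl hi
  · filter_upwards [((b σ).coord i).continuous_of_finiteDimensional.continuousAt.eventually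
      (lt_mem_nhds (h.2 i hi))] with x hx _ using hx

theorem IsOrientedPseudomanifold.repr_nbr_of_repr_eq_zero
    (hP : IsOrientedPseudomanifold b χ nbr) {σ : ι} {a : κ} {x : E} (hx : (b σ).repr x a = 0)
    {i : κ} (hi : i ≠ a) :
    (b (nbr σ a)).repr x i = (b σ).repr x i := by
  have hsum : ∑ j, (b σ).repr x j • b (nbr σ a) j = x := by
    conv_rhs => rw [← (b σ).sum_repr x]
    refine Finset.sum_congr rfl fun j _ => ?_
    rcases eq_or_ne j a with rfl | hj
    · simp [hx]
    · rw [hP.nbr_apply_of_ne σ a j hj]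
  conv_lhs => rw [← hsum]
  rw [Basis.repr_sum_self]

variable [DecidableEq κ]

theorem IsOrientedPseudomanifold.repr_nbr_mul_det (hP : IsOrientedPseudomanifold b χ nbr)
    (e : Basis κ ℝ E) (σ : ι) (a : κ) (x : E) :
    (b (nbr σ a)).repr x a * e.det (b (nbr σ a)) = (b σ).repr x a * e.det (b σ) := by
  have hupd : Function.update (b (nbr σ a)) a x = Function.update (b σ) a x := by
    ext1 i
    rcases eq_or_ne i a with rfl | hi
    · simp
    · simp [Function.update_of_ne hi, hP.nbr_apply_of_ne σ a i hi]
  rw [← Basis.det_update_eq_repr_mul, ← Basis.det_update_eq_repr_mul, ← hupd]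

theorem IsOrientedPseudomanifold.inFacetInterior_nbr (hP : IsOrientedPseudomanifold b χ nbr)
    {σ : ι} {a : κ} {x : E} (h : InFacetInterior b σ a x) : InFacetInterior b (nbr σ a) a x := by
  refine ⟨?_, fun i hi => hP.repr_nbr_of_repr_eq_zero h.1 hi ▸ h.2 i hi⟩
  have hdet := hP.repr_nbr_mul_det (b σ) σ a x
  rw [h.1, zero_mul] at hdet
  exact (mul_eq_zero.1 hdet).resolve_right ((b σ).isUnit_det _).ne_zero

variable (e b χ)

def cellTerm (σ : ι) (x : E) : ℚ :=
  SignType.sign (e.det (b σ)) * χ σ * ∏ i, heaviside ((b σ).repr x i)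

def fanDegree [Fintype ι] (x : E) : ℚ := ∑ σ, cellTerm e b χ σ x

variable {e b χ}

theorem cellTerm_eq_of_pos {σ : ι} {a : κ} {x : E} (h : ∀ i ≠ a, 0 < (b σ).repr x i) :
    cellTerm e b χ σ x = SignType.sign (e.det (b σ)) * χ σ * heaviside ((b σ).repr x a) := by
  rw [cellTerm, Finset.prod_eq_single a (fun i _ hi => heaviside_of_pos (h i hi)) (by simp)]

theorem cellTerm_eventually_eq [FiniteDimensional ℝ E] {σ : ι} {x₀ : E}
    (h : (∃ i, (b σ).repr x₀ i < 0) ∨ ∀ i, (b σ).repr x₀ i ≠ 0) :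
    ∀ᶠ x in 𝓝 x₀, cellTerm e b χ σ x = cellTerm e b χ σ x₀ := by
  have hcont : ∀ i, Continuous fun x => (b σ).repr x i :=
    fun i => ((b σ).coord i).continuous_of_finiteDimensional
  rcases h with ⟨i, hi⟩ | h
  · have hzero : ∀ x, (b σ).repr x i < 0 → cellTerm e b χ σ x = 0 := fun x hx => by
      rw [cellTerm, Finset.prod_eq_zero (Finset.mem_univ i) (heaviside_of_neg hx), mul_zero]
    filter_upwards [(hcont i).continuousAt.eventually (gt_mem_nhds hi)] with x hx
    rw [hzero x hx, hzero x₀ hi]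
  · filter_upwards [eventually_all.2 fun i => eventually_heaviside_eq (hcont i).continuousAt (h i)]
      with x hx
    simp only [cellTerm, hx]

theorem IsOrientedPseudomanifold.cellTerm_add_cellTerm_nbr
    (hP : IsOrientedPseudomanifold b χ nbr) (σ : ι) (a : κ) (x : E) :
    SignType.sign (e.det (b σ)) * χ σ * heaviside ((b σ).repr x a)
      + SignType.sign (e.det (b (nbr σ a))) * χ (nbr σ a) * heaviside ((b (nbr σ a)).repr x a)
      = χ σ * (SignType.sign (e.det (b σ)) - SignType.sign (e.det (b (nbr σ a)))) / 2 := by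
  have hsign := congrArg (fun r : ℝ => (SignType.sign r : ℚ)) (hP.repr_nbr_mul_det e σ a x)
  simp only [sign_mul, SignType.coe_mul] at hsign
  rw [hP.χ_nbr, heaviside, heaviside]
  push_cast
  linear_combination (-(χ σ : ℚ) / 2) * hsign

theorem IsOrientedPseudomanifold.eventually_cellTerm_add_cellTerm_nbr [FiniteDimensional ℝ E]
    (hP : IsOrientedPseudomanifold b χ nbr) {σ : ι} {a : κ} {x₀ : E}
    (h : InFacetInterior b σ a x₀) :
    ∀ᶠ x in 𝓝 x₀, cellTerm e b χ σ x + cellTerm e b χ (nbr σ a) x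
      = cellTerm e b χ σ x₀ + cellTerm e b χ (nbr σ a) x₀ := by
  have hpair : ∀ x, (∀ i ≠ a, 0 < (b σ).repr x i) → (∀ i ≠ a, 0 < (b (nbr σ a)).repr x i) →
      cellTerm e b χ σ x + cellTerm e b χ (nbr σ a) x
        = χ σ * (SignType.sign (e.det (b σ)) - SignType.sign (e.det (b (nbr σ a)))) / 2 :=
    fun x h₁ h₂ => by
      rw [cellTerm_eq_of_pos h₁, cellTerm_eq_of_pos h₂, hP.cellTerm_add_cellTerm_nbr]
  have h' := hP.inFacetInterior_nbr h
  filter_upwards [h.eventually_pos, h'.eventually_pos] with x h₁ h₂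
  rw [hpair x h₁ h₂, hpair x₀ h.2 h'.2]

theorem IsOrientedPseudomanifold.fanDegree_eventually_eq [Fintype ι] [FiniteDimensional ℝ E]
    (hP : IsOrientedPseudomanifold b χ nbr) {x₀ : E} (hx₀ : IsRegularPoint b x₀) :
    ∀ᶠ x in 𝓝 x₀, fanDegree e b χ x = fanDegree e b χ x₀ := by
  classical
  set δ : ι → E → ℚ := fun σ x => cellTerm e b χ σ x - cellTerm e b χ σ x₀
  set walls := Finset.univ.filter fun p : ι × κ => InFacetInterior b p.1 p.2 x₀
  -- near `x₀` only the cones having `x₀` in the relative interior of a facet change their term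
  have hlocal : ∀ σ, ∀ᶠ x in 𝓝 x₀,
      δ σ x = ∑ a, if InFacetInterior b σ a x₀ then δ σ x else 0 := by
    intro σ
    by_cases hσ : ∃ a, InFacetInterior b σ a x₀
    · obtain ⟨a, ha⟩ := hσ
      refine Eventually.of_forall fun x => ?_
      rw [Finset.sum_eq_single a (fun a' _ ha' => if_neg fun h => ha' (h.unique ha))
        (by simp), if_pos ha]
    · push Not at hσ
      filter_upwards [cellTerm_eventually_eq (e := e) (χ := χ)
        (hx₀.exists_neg_or_forall_ne_zero σ hσ)] with x hx
      simp [δ, hx, hσ]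
  have hpairs : ∀ᶠ x in 𝓝 x₀, ∀ p ∈ walls, δ p.1 x + δ (nbr p.1 p.2) x = 0 := by
    refine (eventually_all_finset walls).2 fun p hp => ?_
    filter_upwards [hP.eventually_cellTerm_add_cellTerm_nbr (Finset.mem_filter.1 hp).2]
      with x hx
    simp only [δ]
    linarith
  filter_upwards [eventually_all.2 hlocal, hpairs] with x hx hpx
  have hcancel : ∑ p ∈ walls, δ p.1 x = 0 := by
    refine Finset.sum_involution (fun p _ => (nbr p.1 p.2, p.2)) (fun p hp => hpx p hp)
      (fun p hp hne heq => hne ?_) (fun p hp => ?_) (fun p _ => by simp [hP.nbr_nbr])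
    · have := hpx p hp
      rw [show nbr p.1 p.2 = p.1 from congrArg Prod.fst heq] at this
      linarith
    · exact Finset.mem_filter.2 ⟨Finset.mem_univ _,
        hP.inFacetInterior_nbr (Finset.mem_filter.1 hp).2⟩
  have hsum : fanDegree e b χ x - fanDegree e b χ x₀ = ∑ p ∈ walls, δ p.1 x := by
    rw [fanDegree, fanDegree, ← Finset.sum_sub_distrib, Finset.sum_filter,
      ← Finset.univ_product_univ, Finset.sum_product]
    exact Finset.sum_congr rfl fun σ _ => hx σ
  linarith

theorem IsOrientedPseudomanifold.fanDegree_eq_of_forall_lineMap [Fintype ι]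
    [FiniteDimensional ℝ E] (hP : IsOrientedPseudomanifold b χ nbr) {x y : E}
    (h : ∀ t : ℝ, IsRegularPoint b (AffineMap.lineMap x y t)) :
    fanDegree e b χ x = fanDegree e b χ y := by
  have hlc : IsLocallyConstant fun t : ℝ => fanDegree e b χ (AffineMap.lineMap x y t) :=
    (IsLocallyConstant.iff_eventually_eq _).2 fun t =>
      (AffineMap.lineMap_continuous.tendsto t).eventually (hP.fanDegree_eventually_eq (h t))
  simpa using hlc.apply_eq_of_preconnectedSpace 0 1

theorem IsOrientedPseudomanifold.fanDegree_eq [Fintype ι] [FiniteDimensional ℝ E]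
    (hP : IsOrientedPseudomanifold b χ nbr) {x y : E} (hx : IsRegularPoint b x)
    (hy : IsRegularPoint b y) : fanDegree e b χ x = fanDegree e b χ y := by
  -- Move `x` off every hyperplane `(b σ).repr · i = 0`; then move `y` so that no `2 × 2` minor of
  -- the coordinates of `x'` and `y'` vanishes, which keeps the segment `[x', y']` regular.
  obtain ⟨x', hx'x, hx'⟩ := exists_mem_nhds_forall_ne_zero
    (g := fun p : ι × κ => (b p.1).coord p.2)
    (fun p h => by simpa using LinearMap.congr_fun h (b p.1 p.2))
    (hP.fanDegree_eventually_eq (e := e) hx)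
  obtain ⟨y', hy'y, hy'⟩ := exists_mem_nhds_forall_ne_zero
    (g := fun p : {p : ι × κ × κ // p.2.1 ≠ p.2.2} =>
      (b p.1.1).repr x' p.1.2.1 • (b p.1.1).coord p.1.2.2
        - (b p.1.1).repr x' p.1.2.2 • (b p.1.1).coord p.1.2.1)
    (fun p h => hx' (p.1.1, p.1.2.2) <| by
      simpa [Finsupp.single_apply, p.2] using LinearMap.congr_fun h (b p.1.1 p.1.2.1))
    (hP.fanDegree_eventually_eq (e := e) hy)
  calc fanDegree e b χ x = fanDegree e b χ x' := hx'x.symm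
    _ = fanDegree e b χ y' := hP.fanDegree_eq_of_forall_lineMap
        (isRegularPoint_lineMap fun σ i j hij => by simpa using hy' ⟨(σ, i, j), hij⟩)
    _ = fanDegree e b χ y := hy'y

end Fan

variable {d s : ℕ} {w : Fin (s + 2) → EuclideanSpace ℝ (Fin (s + 1))} {c : Idx d s → Pt d}

theorem sgnR_eq_sign (x : ℝ) : sgnR x = SignType.sign x := by
  rcases lt_trichotomy x 0 with h | rfl | h
  · simp [sgnR, h, h.not_gt]
  · simp [sgnR]
  · simp [sgnR, h]

theorem linearIndependent_rows (hg : SuffGenPos w c) (σ : PartEnc d s) :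
    LinearIndependent ℝ (rows w c σ) := by
  have hPhi : PhiMinus w c σ (Fin.last _) = Set.range (rows w c σ) := by
    ext x
    constructor
    · rintro ⟨i, hi, rfl⟩
      obtain ⟨i', rfl⟩ := Fin.exists_castSucc_eq.2 hi
      exact ⟨i', rfl⟩
    · rintro ⟨i', rfl⟩
      exact ⟨i'.castSucc, (Fin.castSucc_lt_last i').ne, rfl⟩
  exact (hg.1 σ).linearIndependent_of_zero_notMem_affineSpan (hPhi ▸ hg.2 σ (Fin.last _))

def rowBasis (hg : SuffGenPos w c) (σ : PartEnc d s) : Basis (Fin (NN d s)) ℝ (CSp d s) :=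
  basisOfLinearIndependentOfCardEqFinrank (linearIndependent_rows hg σ) (by simp)

@[simp]
theorem coe_rowBasis (hg : SuffGenPos w c) (σ : PartEnc d s) : ⇑(rowBasis hg σ) = rows w c σ :=
  coe_basisOfLinearIndependentOfCardEqFinrank _ _

variable (d s) in
def coordBasis : Basis (Fin (NN d s)) ℝ (CSp d s) :=
  (EuclideanSpace.basisFun (Fin (d + 1) × Fin (s + 1)) ℝ).toBasis.reindex finProdFinEquiv

theorem gsgn_eq_sign_det (σ : PartEnc d s) :
    gsgn w c σ = SignType.sign ((coordBasis d s).det (rows w c σ)) := by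
  rw [gsgn, sgnR_eq_sign, Basis.det_apply, ← Matrix.det_transpose]
  rfl

def colorIdx (a : Fin (NN d s)) : Fin (d + 1) :=
  ⟨(a : ℕ) / (s + 1), Nat.div_lt_of_lt_mul (by rw [Nat.mul_comm]; exact a.isLt)⟩

def slotIdx (a : Fin (NN d s)) : Fin (s + 1) :=
  ⟨(a : ℕ) % (s + 1), Nat.mod_lt _ (Nat.succ_pos s)⟩

theorem eq_of_colorIdx_eq_of_slotIdx_eq {i a : Fin (NN d s)} (hk : colorIdx i = colorIdx a)
    (hj : slotIdx i = slotIdx a) : i = a := by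
  rw [Fin.ext_iff] at hk hj
  apply Fin.ext
  rw [← Nat.div_add_mod (i : ℕ) (s + 1), ← Nat.div_add_mod (a : ℕ) (s + 1)]
  exact congrArg₂ _ (congrArg _ hk) hj

theorem classOf_castSucc_s12 (σ : PartEnc d s) (i : Fin (NN d s)) :
    classOf σ i.castSucc = σ (colorIdx i) (slotIdx i).castSucc := by
  rw [classOf, dif_pos (by simp)]
  rfl

/-- The partition sharing with `σ` the ridge opposite the `a`-th point: that point moves to the
unique class containing no point of its color. -/
def flipAt (σ : PartEnc d s) (a : Fin (NN d s)) : PartEnc d s :=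
  Function.update σ (colorIdx a)
    (σ (colorIdx a) * Equiv.swap (slotIdx a).castSucc (Fin.last (s + 1)))

theorem flipAt_flipAt (σ : PartEnc d s) (a : Fin (NN d s)) : flipAt (flipAt σ a) a = σ := by
  rw [flipAt, flipAt, Function.update_self, Function.update_idem, mul_assoc,
    Equiv.swap_mul_self, mul_one, Function.update_eq_self]

theorem csgn_flipAt (σ : PartEnc d s) (a : Fin (NN d s)) : csgn (flipAt σ a) = -csgn σ := by
  classical
  have hsign : (fun k => (Equiv.Perm.sign (flipAt σ a k) : ℤ)) =
      Function.update (fun k => (Equiv.Perm.sign (σ k) : ℤ)) (colorIdx a)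
        (-Equiv.Perm.sign (σ (colorIdx a))) := by
    ext1 k
    rcases eq_or_ne k (colorIdx a) with rfl | hk
    · simp [flipAt, Equiv.Perm.sign_swap (Fin.castSucc_lt_last (slotIdx a)).ne]
    · simp [flipAt, Function.update_of_ne hk]
  rw [csgn, hsign, Finset.prod_update_of_mem (Finset.mem_univ _), csgn,
    ← Finset.mul_prod_erase _ _ (Finset.mem_univ (colorIdx a)), Finset.sdiff_singleton_eq_erase]
  ring

theorem rows_flipAt_of_ne (σ : PartEnc d s) {a i : Fin (NN d s)} (h : i ≠ a) :
    rows w c (flipAt σ a) i = rows w c σ i := by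
  suffices classOf (flipAt σ a) i.castSucc = classOf σ i.castSucc by
    simp only [rows, allClones, this]
  rw [classOf_castSucc_s12, classOf_castSucc_s12]
  rcases eq_or_ne (colorIdx i) (colorIdx a) with hk | hk
  · have hj : slotIdx i ≠ slotIdx a := fun hj => h (eq_of_colorIdx_eq_of_slotIdx_eq hk hj)
    rw [hk, flipAt, Function.update_self, Equiv.Perm.mul_apply,
      Equiv.swap_apply_of_ne_of_ne (by simpa using hj) (Fin.castSucc_lt_last _).ne]
  · rw [flipAt, Function.update_of_ne hk]

theorem isOrientedPseudomanifold_rowBasis (hg : SuffGenPos w c) :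
    IsOrientedPseudomanifold (rowBasis hg) csgn flipAt where
  nbr_apply_of_ne σ a i hi := by simp [rows_flipAt_of_ne σ hi]
  nbr_nbr := flipAt_flipAt
  χ_nbr := csgn_flipAt

theorem forall_pos_or_exists_neg_of_genericRay (hg : SuffGenPos w c) {y : CSp d s} (hy : y ≠ 0)
    (hgy : GenericRay w c y) (σ : PartEnc d s) :
    (∀ i, 0 < (rowBasis hg σ).repr y i) ∨ ∃ i, (rowBasis hg σ).repr y i < 0 := by
  set b := rowBasis hg σ
  by_contra! h
  obtain ⟨⟨a, ha⟩, hnn⟩ := h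
  have hS := b.sum_repr_pos hy hnn
  -- the ray through `y` meets the ridge opposite the `a`-th vertex
  refine hgy σ a _ ⟨(∑ i, b.repr y i)⁻¹, inv_nonneg.2 hS.le, rfl⟩ ?_
  have hmem := b.mem_convexHull_image_ne (x := (∑ i, b.repr y i)⁻¹ • y) (a := a)
    (fun i => by simpa using mul_nonneg (inv_nonneg.2 hS.le) (hnn i))
    (by simp [← Finset.mul_sum, hS.ne'])
    (by simp [le_antisymm ha (hnn a)])
  rwa [coe_rowBasis] at hmem

theorem degRay_eq_fanDegree (hg : SuffGenPos w c) {y : CSp d s} (hy : y ≠ 0)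
    (hgen : ∀ σ, (∀ i, 0 < (rowBasis hg σ).repr y i) ∨ ∃ i, (rowBasis hg σ).repr y i < 0) :
    (degRay w c y : ℚ) = fanDegree (coordBasis d s) (rowBasis hg) csgn y := by
  classical
  rw [degRay, fanDegree, Int.cast_sum]
  refine Finset.sum_congr rfl fun σ _ => ?_
  have hhit : (raySet y ∩ Fface w c σ).Nonempty ↔ ∀ i, 0 ≤ (rowBasis hg σ).repr y i := by
    refine Iff.trans ?_ ((rowBasis hg σ).exists_smul_mem_convexHull_range_iff.trans
      (and_iff_right hy))
    simp [Set.Nonempty, raySet, Fface]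
  rw [cellTerm, coe_rowBasis]
  rcases hgen σ with hpos | ⟨i, hneg⟩
  · rw [if_pos (hhit.2 fun i => (hpos i).le), psgn, gsgn_eq_sign_det,
      Finset.prod_eq_one fun i _ => heaviside_of_pos (hpos i)]
    simp
  · rw [if_neg fun h => (hhit.1 h i).not_gt hneg,
      Finset.prod_eq_zero (Finset.mem_univ i) (heaviside_of_neg hneg)]
    simp

end

end BMZ

open BMZ in
theorem deg_independent_of_ray_general (d s : ℕ)
    (w : Fin (s + 2) → EuclideanSpace ℝ (Fin (s + 1)))
    (c : Idx d s → Pt d)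
    (hg : SuffGenPos w c)
    (u v : CSp d s) (hu : u ≠ 0) (hv : v ≠ 0)
    (hgu : GenericRay w c u) (hgv : GenericRay w c v) :
    degRay w c u = degRay w c v := by
  have hu' := forall_pos_or_exists_neg_of_genericRay hg hu hgu
  have hv' := forall_pos_or_exists_neg_of_genericRay hg hv hgv
  have hdeg := (isOrientedPseudomanifold_rowBasis hg).fanDegree_eq (e := coordBasis d s)
    (isRegularPoint_of_forall_pos_or_exists_neg hu')
    (isRegularPoint_of_forall_pos_or_exists_neg hv')
  rw [← degRay_eq_fanDegree hg hu hu', ← degRay_eq_fanDegree hg hv hv'] at hdeg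
  exact_mod_cast hdeg

open BMZ in
/-- Let `𝒞` be a BMZ-collection in sufficiently general position. If `ψ` and `ν`
are generic rays for `𝒞` (rays emanating from `0`, with directions `u, v`),
then `deg_ψ(𝒞) = deg_ν(𝒞)`. -/
theorem deg_independent_of_ray (d s : ℕ) (hd : 1 ≤ d)
    (w : Fin (s + 2) → EuclideanSpace ℝ (Fin (s + 1))) (hw : IsRegularSimplex w)
    (c : Idx d s → Pt d) (hc : Function.Injective c)
    (hg : SuffGenPos w c)
    (u v : CSp d s) (hu : u ≠ 0) (hv : v ≠ 0)
    (hgu : GenericRay w c u) (hgv : GenericRay w c v) :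
    degRay w c u = degRay w c v :=
  deg_independent_of_ray_general d s w c hg u v hu hv hgu hgv
end

section
/- Let 𝒞 be a BMZ-collection in sufficiently general position, let z* := φ_r(z), and let ρ be the ray emanating from 0 in the direction −z* (this ray is well defined, i.e., z* ≠ 0). Then for every ℛ ∈ 𝔅(𝒞), the intersection ρ ∩ F_ℛ is either empty or consists of exactly one point, and this point lies in the relative interior of F_ℛ. -/
open Finset

/-! The affine hull of `F_ℛ` misses `0`, so the ray, which lies on a line through `0`, meets it
at most once. A point `t • -z*` of the ray on `F_ℛ` avoids every facet of the simplex `F_ℛ`: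
the facet opposite to `a` spans an affine subspace of `aff Φ(ℛ - a)`, which also contains `z*`,
and `0` lies on the segment between `t • -z*` and `z*`, contradicting general position. -/

section RelativeInterior

variable {ι E : Type*} [Fintype ι] [NormedAddCommGroup E] [NormedSpace ℝ E]

/- The vertices `p i`, viewed inside their affine span `A`, form an affine basis of `A`;
its barycentric coordinates are continuous, so the points with all coordinates positive form
an open subset of `A` contained in the simplex. -/
theorem AffineIndependent.affineCombination_mem_intrinsicInterior_convexHull {p : ι → E}
    (hp : AffineIndependent ℝ p) {μ : ι → ℝ} (hpos : ∀ i, 0 < μ i) (hsum : ∑ i, μ i = 1) :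
    Finset.univ.affineCombination ℝ p μ ∈ intrinsicInterior ℝ (convexHull ℝ (Set.range p)) := by
  classical
  obtain ⟨i₀⟩ : Nonempty ι := by
    by_contra h
    rw [not_nonempty_iff] at h
    simp at hsum
  set A := affineSpan ℝ (Set.range p)
  have : Nonempty (Set.range p) := ⟨⟨p i₀, i₀, rfl⟩⟩
  have : Nonempty A := ⟨⟨p i₀, subset_affineSpan ℝ _ ⟨i₀, rfl⟩⟩⟩
  let q : ι → A := fun i => ⟨p i, subset_affineSpan ℝ _ ⟨i, rfl⟩⟩
  have hq_coe : ∀ w : ι → ℝ, ∑ i, w i = 1 →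
      ((Finset.univ.affineCombination ℝ q w : A) : E) = Finset.univ.affineCombination ℝ p w :=
    fun w hw => Finset.univ.map_affineCombination q w hw A.subtype
  have hq_range : Set.range q = (↑) ⁻¹' Set.range p := by
    ext y
    exact ⟨fun ⟨i, hi⟩ => ⟨i, congrArg Subtype.val hi⟩, fun ⟨i, hi⟩ => ⟨i, Subtype.ext hi⟩⟩
  let b : AffineBasis ι ℝ A := ⟨q, AffineIndependent.of_comp A.subtype hp,
    by rw [hq_range]; exact affineSpan_coe_preimage_eq_top _⟩
  have hb : ⇑b = q := rfl
  rw [mem_intrinsicInterior, affineSpan_convexHull]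
  refine ⟨Finset.univ.affineCombination ℝ q μ, ?_, hq_coe μ hsum⟩
  have hopen : IsOpen {y : A | ∀ i, 0 < b.coord i y} := by
    simp only [Set.ofPred_forall]
    exact isOpen_iInter_of_finite fun i =>
      isOpen_lt continuous_const (continuous_barycentric_coord b i)
  refine interior_maximal (fun y hy => ?_) hopen fun i => ?_
  · rw [Set.mem_preimage, ← b.affineCombination_coord_eq_self y, hb,
      hq_coe _ (b.sum_coord_apply_eq_one y)]
    exact affineCombination_mem_convexHull (fun i _ => (hy i).le) (b.sum_coord_apply_eq_one y)
  · rw [← hb, b.coord_apply_combination_of_mem (Finset.mem_univ i) hsum]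
    exact hpos i

theorem AffineIndependent.mem_intrinsicInterior_convexHull {p : ι → E}
    (hp : AffineIndependent ℝ p) {x : E} (hx : x ∈ convexHull ℝ (Set.range p))
    (hfacet : ∀ j, x ∉ affineSpan ℝ (p '' {i | i ≠ j})) :
    x ∈ intrinsicInterior ℝ (convexHull ℝ (Set.range p)) := by
  classical
  rw [convexHull_range_eq_exists_affineCombination] at hx
  obtain ⟨t, μ, hμ0, hμ1, rfl⟩ := hx
  have hpos : ∀ j, j ∈ t ∧ 0 < μ j := by
    intro j
    by_contra h
    refine hfacet j (affineCombination_mem_affineSpan_image hμ1 (fun i hi hij => ?_) p)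
    obtain rfl : i = j := not_not.mp hij
    exact le_antisymm (not_lt.mp fun h' => h ⟨hi, h'⟩) (hμ0 i hi)
  obtain rfl : t = Finset.univ := Finset.eq_univ_of_forall fun j => (hpos j).1
  exact hp.affineCombination_mem_intrinsicInterior_convexHull (fun j => (hpos j).2) hμ1

end RelativeInterior

section RaysAndAffineSubspaces

variable {V : Type*} [AddCommGroup V] [Module ℝ V] {A : AffineSubspace ℝ V}

theorem AffineSubspace.eq_of_smul_mem_of_zero_notMem (h0 : (0 : V) ∉ A) {u : V} {t t' : ℝ}
    (ht : t • u ∈ A) (ht' : t' • u ∈ A) : t = t' := by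
  by_contra hne
  have hne' : t - t' ≠ 0 := sub_ne_zero.mpr hne
  refine h0 ?_
  convert AffineMap.lineMap_mem (t / (t - t')) ht ht' using 1
  rw [AffineMap.lineMap_apply_module, smul_smul, smul_smul, ← add_smul]
  have : (1 - t / (t - t')) * t + t / (t - t') * t' = 0 := by
    field_simp
    ring
  rw [this, zero_smul]

theorem AffineSubspace.zero_mem_of_mem_of_smul_neg_mem {z : V} (hz : z ∈ A) {t : ℝ} (ht : 0 ≤ t)
    (hx : t • -z ∈ A) : (0 : V) ∈ A := by
  convert AffineMap.lineMap_mem (t / (1 + t)) hx hz using 1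
  rw [AffineMap.lineMap_apply_module, smul_neg, smul_neg, smul_smul, ← neg_smul, ← add_smul]
  have : -((1 - t / (1 + t)) * t) + t / (1 + t) = 0 := by
    field_simp
    ring
  rw [this, zero_smul]

end RaysAndAffineSubspaces

namespace BMZ

variable {d s : ℕ} {w : Fin (s + 2) → EuclideanSpace ℝ (Fin (s + 1))} {c : Idx d s → Pt d}

theorem allClones_last (σ : PartEnc d s) : allClones w c σ (Fin.last (NN d s)) = zstar w c := by
  simp [allClones, zstar, classOf]

theorem PhiMinus_last (σ : PartEnc d s) :
    PhiMinus w c σ (Fin.last (NN d s)) = Set.range (rows w c σ) := by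
  ext y
  constructor
  · rintro ⟨i, hi, rfl⟩
    obtain ⟨j, rfl⟩ := Fin.exists_castSucc_eq.2 hi
    exact ⟨j, rfl⟩
  · rintro ⟨j, rfl⟩
    exact ⟨j.castSucc, (Fin.castSucc_lt_last j).ne, rfl⟩

theorem zstar_mem_affineSpan_PhiMinus (σ : PartEnc d s) (j : Fin (NN d s)) :
    zstar w c ∈ affineSpan ℝ (PhiMinus w c σ j.castSucc) :=
  subset_affineSpan ℝ _ ⟨Fin.last _, (Fin.castSucc_lt_last j).ne', allClones_last σ⟩

theorem affineSpan_rows_image_ne_le (σ : PartEnc d s) (j : Fin (NN d s)) :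
    affineSpan ℝ (rows w c σ '' {i | i ≠ j}) ≤ affineSpan ℝ (PhiMinus w c σ j.castSucc) :=
  affineSpan_mono ℝ <| by
    rintro _ ⟨i, hi, rfl⟩
    exact ⟨i.castSucc, (Fin.castSucc_injective _).ne hi, rfl⟩

theorem zstar_ne_zero (hg : SuffGenPos w c) : zstar w c ≠ 0 := fun h =>
  hg.2 1 (⟨0, by positivity⟩ : Fin (NN d s)).castSucc (h ▸ zstar_mem_affineSpan_PhiMinus 1 _)

theorem zero_notMem_affineSpan_rows (hg : SuffGenPos w c) (σ : PartEnc d s) :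
    (0 : CSp d s) ∉ affineSpan ℝ (Set.range (rows w c σ)) :=
  PhiMinus_last (w := w) (c := c) σ ▸ hg.2 σ _

theorem raySet_inter_Fface_subsingleton (hg : SuffGenPos w c) (σ : PartEnc d s) :
    (raySet (-(zstar w c)) ∩ Fface w c σ).Subsingleton := by
  rintro _ ⟨⟨t, -, rfl⟩, hx⟩ _ ⟨⟨t', -, rfl⟩, hy⟩
  rw [AffineSubspace.eq_of_smul_mem_of_zero_notMem (zero_notMem_affineSpan_rows hg σ)
    (convexHull_subset_affineSpan _ hx) (convexHull_subset_affineSpan _ hy)]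

theorem mem_intrinsicInterior_Fface (hg : SuffGenPos w c) (σ : PartEnc d s) {x : CSp d s}
    (hx : x ∈ raySet (-(zstar w c)) ∩ Fface w c σ) : x ∈ intrinsicInterior ℝ (Fface w c σ) := by
  obtain ⟨⟨t, ht, rfl⟩, hxF⟩ := hx
  refine (hg.1 σ).mem_intrinsicInterior_convexHull hxF fun j hj => hg.2 σ j.castSucc ?_
  exact AffineSubspace.zero_mem_of_mem_of_smul_neg_mem (zstar_mem_affineSpan_PhiMinus σ j) ht
    (affineSpan_rows_image_ne_le σ j hj)

end BMZ

open BMZ in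
theorem ray_meets_each_facet_once_general (d s : ℕ)
    (w : Fin (s + 2) → EuclideanSpace ℝ (Fin (s + 1)))
    (c : Idx d s → Pt d)
    (hg : SuffGenPos w c) :
    zstar w c ≠ 0 ∧
    ∀ σ : PartEnc d s,
      raySet (-(zstar w c)) ∩ Fface w c σ = ∅ ∨
      ∃ x, raySet (-(zstar w c)) ∩ Fface w c σ = {x} ∧
        x ∈ intrinsicInterior ℝ (Fface w c σ) :=
  ⟨zstar_ne_zero hg, fun σ => (Set.eq_empty_or_nonempty _).imp id fun ⟨x, hx⟩ =>
    ⟨x, (raySet_inter_Fface_subsingleton hg σ).eq_singleton_of_mem hx,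
      mem_intrinsicInterior_Fface hg σ hx⟩⟩

open BMZ in
/-- Let `𝒞` be a BMZ-collection in sufficiently general position, `z* = φ_r(z)`,
and `ρ` the ray emanating from `0` in direction `-z*` (well defined: `z* ≠ 0`).
Then for every `ℛ ∈ 𝔅(𝒞)` the intersection `ρ ∩ F_ℛ` is either empty or
consists of exactly one point, which lies in the relative interior of `F_ℛ`. -/
theorem ray_meets_each_facet_once (d s : ℕ) (hd : 1 ≤ d)
    (w : Fin (s + 2) → EuclideanSpace ℝ (Fin (s + 1))) (hw : IsRegularSimplex w)
    (c : Idx d s → Pt d) (hc : Function.Injective c)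
    (hg : SuffGenPos w c) :
    zstar w c ≠ 0 ∧
    ∀ σ : PartEnc d s,
      raySet (-(zstar w c)) ∩ Fface w c σ = ∅ ∨
      ∃ x, raySet (-(zstar w c)) ∩ Fface w c σ = {x} ∧
        x ∈ intrinsicInterior ℝ (Fface w c σ) :=
  ray_meets_each_facet_once_general d s w c hg
end
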